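/- arXiv:math/0507535 — 6 statements merged into one kernel-verified Lean document; each statement's English description precedes it below -/
import Mathlib

section
/- Let ψ : (0,∞) → (0,∞) be continuous and suppose ψ(t) = a₁·ψ(b₁·t) and ψ(t) = a₂·ψ(b₂·t) for all t > 0, where 0 < b₁, b₂ < 1 < a₁, a₂, a₁·b₁^α = 1 = a₂·b₂^α for some α > 0, and ln(b₁)/ln(b₂) is irrational. Then ψ(t) = λ·t^α for some constant λ > 0. -/
open Real

theorem stmt_2 (ψ : ℝ → ℝ) (a₁ a₂ b₁ b₂ α : ℝ)
    (ha₁ : 1 < a₁) (ha₂ : 1 < a₂)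
    (hb₁ : b₁ ∈ Set.Ioo (0:ℝ) 1) (hb₂ : b₂ ∈ Set.Ioo (0:ℝ) 1) (hα : 0 < α)
    (hab₁ : a₁ * b₁ ^ α = 1) (hab₂ : a₂ * b₂ ^ α = 1)
    (hirr : Irrational (Real.log b₁ / Real.log b₂))
    (hcont : ContinuousOn ψ (Set.Ioi 0))
    (hψpos : ∀ t : ℝ, 0 < t → 0 < ψ t)
    (hfe₁ : ∀ t : ℝ, 0 < t → ψ t = a₁ * ψ (b₁ * t))
    (hfe₂ : ∀ t : ℝ, 0 < t → ψ t = a₂ * ψ (b₂ * t)) :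
    ∃ lam : ℝ, 0 < lam ∧ ∀ t : ℝ, 0 < t → ψ t = lam * t ^ α := by
  obtain ⟨hb₁0, hb₁1⟩ := hb₁
  obtain ⟨hb₂0, hb₂1⟩ := hb₂
  set L := Real.log b₁ with hL
  set M := Real.log b₂ with hM
  have hLneg : L < 0 := Real.log_neg hb₁0 hb₁1
  have hMneg : M < 0 := Real.log_neg hb₂0 hb₂1
  -- F x = ψ(exp x) * exp(-α x)
  set F : ℝ → ℝ := fun x => ψ (Real.exp x) * Real.exp (-α * x) with hF
  have hFcont : Continuous F := by
    apply Continuous.mul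
    · rw [← continuousOn_univ]
      exact hcont.comp continuous_exp.continuousOn
        (fun x _ => Set.mem_Ioi.mpr (Real.exp_pos x))
    · exact Real.continuous_exp.comp (continuous_const.mul continuous_id)
  -- periodicity
  have keyper : ∀ (a b : ℝ), 1 < a → 0 < b → b < 1 → a * b ^ α = 1 →
      (∀ t : ℝ, 0 < t → ψ t = a * ψ (b * t)) → ∀ x, F (x + Real.log b) = F x := by
    intro a b ha hb0 hb1 hab hfe x
    have hbα : b ^ α = 1 / a := by field_simp at hab ⊢; linarith [hab]
    have h1 : Real.exp (x + Real.log b) = b * Real.exp x := by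
      rw [Real.exp_add, Real.exp_log hb0]; ring
    have h2 : ψ (b * Real.exp x) = ψ (Real.exp x) / a := by
      rw [hfe (Real.exp x) (Real.exp_pos x)]; field_simp
    have h3 : Real.exp (-α * (x + Real.log b)) = Real.exp (-α * x) * a := by
      rw [show -α * (x + Real.log b) = -α * x + (-α * Real.log b) by ring, Real.exp_add]
      congr 1
      rw [show -α * Real.log b = -(α * Real.log b) by ring, Real.exp_neg,
        ← Real.log_rpow hb0, Real.exp_log (Real.rpow_pos_of_pos hb0 α), hbα]
      field_simp
    simp only [hF, h1, h2, h3]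
    have ha0 : a ≠ 0 := by positivity
    field_simp
  have per₁ : ∀ x, F (x + L) = F x := keyper a₁ b₁ ha₁ hb₁0 hb₁1 hab₁ hfe₁
  have per₂ : ∀ x, F (x + M) = F x := keyper a₂ b₂ ha₂ hb₂0 hb₂1 hab₂ hfe₂
  -- subgroup
  set S : AddSubgroup ℝ := AddSubgroup.closure {L, M} with hS
  have perS : ∀ s ∈ S, ∀ x, F (x + s) = F x := by
    intro s hs
    induction hs using AddSubgroup.closure_induction with
    | mem g hg =>
      rcases hg with h | h
      · subst h; exact per₁
      · subst h; exact per₂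
    | zero => simp
    | add g h _ _ ihg ihh =>
      intro x
      rw [← add_assoc, ihh, ihg]
    | neg g _ ihg =>
      intro x
      have := ihg (x + -g)
      simpa using this.symm
  have hdense : Dense (S : Set ℝ) := by
    rcases S.dense_or_cyclic with h | ⟨c, hc⟩
    · exact h
    · exfalso
      have hLS : L ∈ S := AddSubgroup.subset_closure (by simp)
      have hMS : M ∈ S := AddSubgroup.subset_closure (by simp)
      rw [hc] at hLS hMS
      rw [AddSubgroup.mem_closure_singleton] at hLS hMS
      obtain ⟨m, hm⟩ := hLS
      obtain ⟨n, hn⟩ := hMS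
      have hn0 : n ≠ 0 := by
        rintro rfl; simp at hn; exact hMneg.ne hn.symm
      have hc0 : c ≠ 0 := by
        rintro rfl; simp at hn; exact hMneg.ne hn.symm
      apply hirr
      refine ⟨(m : ℚ) / (n : ℚ), ?_⟩
      push_cast
      rw [← hm, ← hn]
      field_simp
      ring
  -- F is constant: F x = F 0 for all x
  have hFconst : ∀ x, F x = F 0 := by
    intro x
    have : ∀ s ∈ (S : Set ℝ), F s = F 0 := by
      intro s hs
      have := perS s hs 0
      simpa using this
    have heq : Set.EqOn F (fun _ => F 0) (closure (S : Set ℝ)) :=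
      Set.EqOn.closure (fun s hs => this s hs) hFcont continuous_const
    have := heq (hdense x)
    simpa using this
  refine ⟨ψ 1, hψpos 1 one_pos, fun t ht => ?_⟩
  have h1 := hFconst (Real.log t)
  simp only [hF, Real.exp_log ht, mul_zero, neg_zero, Real.exp_zero, mul_one,
    Real.exp_one_rpow] at h1
  have h2 : Real.exp (-α * Real.log t) = t ^ (-α) := by
    rw [show -α * Real.log t = Real.log t * (-α) by ring, ← Real.rpow_def_of_pos ht]
  rw [h2] at h1
  have ht' : (0:ℝ) < t ^ α := Real.rpow_pos_of_pos ht α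
  have : ψ t * t ^ (-α) * t ^ α = ψ 1 * t ^ α := by rw [h1]
  rwa [mul_assoc, ← Real.rpow_add ht, neg_add_cancel, Real.rpow_zero, mul_one] at this
end

section
/- Let F(x) = (1+ψ(x))^(−1/k), k a positive integer, where ψ(x) = a·ψ(c·x) for all x, a > 1, c > 0. Then F^k(x) = F^k(cx)/(a − (a−1)·F^k(cx)) for all x, i.e., F is Harris(1,a,k)-max stable. -/
open Real

theorem stmt_8 (ψ : ℝ → ℝ) (a c : ℝ) (k : ℕ) (hk : 0 < k)
    (ha : 1 < a) (hc : 0 < c)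
    (hψnn : ∀ x : ℝ, 0 ≤ ψ x)
    (hfe : ∀ x : ℝ, ψ x = a * ψ (c * x))
    (F : ℝ → ℝ) (hF : ∀ x : ℝ, F x = (1 + ψ x) ^ (-(1 / (k : ℝ)))) :
    ∀ x : ℝ, (F x) ^ k = (F (c * x)) ^ k / (a - (a - 1) * (F (c * x)) ^ k) := by
  intro x
  have hk' : (k : ℝ) ≠ 0 := Nat.cast_ne_zero.mpr hk.ne'
  have key : ∀ y : ℝ, (F y) ^ k = (1 + ψ y)⁻¹ := by
    intro y
    have h1 : (0 : ℝ) < 1 + ψ y := by linarith [hψnn y]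
    rw [hF, ← rpow_natCast ((1 + ψ y) ^ (-(1 / (k : ℝ)))) k, ← rpow_mul h1.le]
    rw [show -(1 / (k : ℝ)) * k = -1 by field_simp]
    rw [rpow_neg_one]
  rw [key, key]
  have h1 : (0 : ℝ) < 1 + ψ x := by linarith [hψnn x]
  have h2 : (0 : ℝ) < 1 + ψ (c * x) := by linarith [hψnn (c * x)]
  have h3 : ψ x = a * ψ (c * x) := hfe x
  have h4 : a - (a - 1) * (1 + ψ (c * x))⁻¹ ≠ 0 := by
    rw [sub_ne_zero]
    intro h
    have : a * (1 + ψ (c * x)) = (a - 1) := by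
      field_simp at h
      linarith [h]
    nlinarith [hψnn (c * x)]
  rw [eq_div_iff h4]
  field_simp
  linarith [h3]
end

section
/- Let R(x) = (1+ψ(x))^(−1/k) for x > 0 (survival function), where p·ψ(x) = ψ(p^(1/α)·x) for all x > 0, 0 < p < 1, α > 0, k a positive integer. Then there exists a function S : (0,∞) → (0,1] such that R(x) = R(b·x)·S(x) for all x > 0, where b = p^(1/α); explicitly S(x) = (a − (a−1)/(1+ψ(bx)))^(−1/k) with a = 1/p. -/
open Real

theorem stmt_9 (ψ : ℝ → ℝ) (p α : ℝ) (k : ℕ) (hk : 0 < k)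
    (hp0 : 0 < p) (hp1 : p < 1) (hα : 0 < α)
    (hψnn : ∀ x : ℝ, 0 < x → 0 ≤ ψ x)
    (hfe : ∀ x : ℝ, 0 < x → p * ψ x = ψ (p ^ (1 / α) * x))
    (R : ℝ → ℝ) (hR : ∀ x : ℝ, R x = (1 + ψ x) ^ (-(1 / (k : ℝ))))
    (a b : ℝ) (ha : a = 1 / p) (hb : b = p ^ (1 / α))
    (S : ℝ → ℝ)
    (hS : ∀ x : ℝ, S x = (a - (a - 1) / (1 + ψ (b * x))) ^ (-(1 / (k : ℝ)))) :
    ∀ x : ℝ, 0 < x → R x = R (b * x) * S x ∧ 0 < S x ∧ S x ≤ 1 := by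
  intro x hx
  have hψb : ψ (b * x) = p * ψ x := by rw [hb, ← hfe x hx]
  have hψx : 0 ≤ ψ x := hψnn x hx
  have h1 : (0:ℝ) < 1 + ψ x := by linarith
  have h2 : (0:ℝ) < 1 + p * ψ x := by positivity
  have hbase : a - (a - 1) / (1 + ψ (b * x)) = (1 + ψ x) / (1 + p * ψ x) := by
    rw [hψb, ha]
    field_simp
    ring
  have hbasepos : (0:ℝ) < (1 + ψ x) / (1 + p * ψ x) := by positivity
  have hbase1 : (1:ℝ) ≤ (1 + ψ x) / (1 + p * ψ x) := by
    rw [le_div_iff₀ h2]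
    nlinarith
  have hSx : S x = ((1 + ψ x) / (1 + p * ψ x)) ^ (-(1 / (k : ℝ))) := by
    rw [hS, hbase]
  refine ⟨?_, ?_, ?_⟩
  · rw [hR, hR, hSx, hψb, ← Real.mul_rpow h2.le hbasepos.le,
      mul_div_cancel₀ _ h2.ne']
  · rw [hSx]; exact Real.rpow_pos_of_pos hbasepos _
  · rw [hSx]
    apply Real.rpow_le_one_of_one_le_of_nonpos hbase1
    simp [div_nonneg, Nat.cast_nonneg]
end

section
/- Let R(x) = 1/(1+x^α) for x > 0, α > 0 (Pareto survival function). Then for every c ∈ (0,1) there exists a survival function S_c : (0,∞) → (0,1] (nonincreasing, tending to 1 as x→0⁺ and to a limit ≥ 0 as x→∞) such that R(x) = R(c·x)·S_c(x) for all x > 0; explicitly S_c(x) = (1+c^α x^α)/(1+x^α), and S_c is indeed nonincreasing with values in (0,1]. -/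
open Real

theorem stmt_10 (α : ℝ) (hα : 0 < α)
    (R : ℝ → ℝ) (hR : ∀ x : ℝ, 0 < x → R x = 1 / (1 + x ^ α)) :
    ∀ c : ℝ, c ∈ Set.Ioo (0:ℝ) 1 →
      ∃ S : ℝ → ℝ,
        (∀ x : ℝ, 0 < x → S x = (1 + c ^ α * x ^ α) / (1 + x ^ α)) ∧
        (∀ x : ℝ, 0 < x → R x = R (c * x) * S x) ∧
        AntitoneOn S (Set.Ioi 0) ∧
        (∀ x : ℝ, 0 < x → 0 < S x ∧ S x ≤ 1) ∧
        Filter.Tendsto S (nhdsWithin 0 (Set.Ioi 0)) (nhds 1) := by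
  intro c hc
  obtain ⟨hc0, hc1⟩ := hc
  set k : ℝ := c ^ α with hk
  have hk0 : 0 < k := Real.rpow_pos_of_pos hc0 α
  have hk1 : k ≤ 1 := by
    calc k ≤ 1 ^ α := Real.rpow_le_rpow hc0.le hc1.le hα.le
    _ = 1 := Real.one_rpow α
  refine ⟨fun x => (1 + k * x ^ α) / (1 + x ^ α), fun x _ => rfl, ?_, ?_, ?_, ?_⟩
  · intro x hx
    have hxpos : (0:ℝ) < x ^ α := Real.rpow_pos_of_pos hx α
    have hcx : (c * x) ^ α = k * x ^ α := Real.mul_rpow hc0.le hx.le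
    rw [hR x hx, hR (c * x) (mul_pos hc0 hx), hcx]
    have h1 : (0:ℝ) < 1 + x ^ α := by linarith
    have h2 : (0:ℝ) < 1 + k * x ^ α := by nlinarith
    field_simp
  · intro a ha b hb hab
    simp only [Set.mem_Ioi] at ha hb
    have hab' : a ^ α ≤ b ^ α := Real.rpow_le_rpow ha.le hab hα.le
    have hapos : (0:ℝ) < a ^ α := Real.rpow_pos_of_pos ha α
    have h1 : (0:ℝ) < 1 + a ^ α := by linarith
    have h2 : (0:ℝ) < 1 + b ^ α := by linarith
    rw [div_le_div_iff₀ h2 h1]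
    nlinarith [mul_le_mul_of_nonneg_left hab' hk0.le]
  · intro x hx
    have hxpos : (0:ℝ) < x ^ α := Real.rpow_pos_of_pos hx α
    have h1 : (0:ℝ) < 1 + x ^ α := by linarith
    have h2 : (0:ℝ) < 1 + k * x ^ α := by nlinarith
    constructor
    · positivity
    · rw [div_le_one h1]
      nlinarith
  · have hcont : ContinuousAt (fun x : ℝ => (1 + k * x ^ α) / (1 + x ^ α)) 0 := by
      have hr : ContinuousAt (fun x : ℝ => x ^ α) 0 :=
        Real.continuousAt_rpow_const 0 α (Or.inr hα.le)
      have h0 : (0:ℝ) ^ α = 0 := Real.zero_rpow hα.ne'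
      have : (1:ℝ) + (0:ℝ) ^ α ≠ 0 := by rw [h0]; norm_num
      exact ((continuousAt_const.add (continuousAt_const.mul hr)).div
        (continuousAt_const.add hr) this)
    have : ((1:ℝ) + k * (0:ℝ) ^ α) / (1 + (0:ℝ) ^ α) = 1 := by
      rw [Real.zero_rpow hα.ne']; norm_num
    have := hcont.continuousWithinAt (s := Set.Ioi 0)
    simpa [Real.zero_rpow hα.ne'] using this.tendsto
end

section
/- Let φ(s) = (1+ψ(1−s))^(−1/k), 0 < s < 1, where ψ(u) = a·ψ(b·u) for all u ∈ (0,1), a > 1, 0 < b < 1, k a positive integer, ψ ≥ 0, ψ(0)=0. Then φ(s) = φ_b(s)·Q(s) where φ_b(s) := (1+ψ(b(1−s)))^(−1/k) and Q(s) := (a − (a−1)/(1+ψ(b(1−s))))^(−1/k), and Q(1) = 1 with 0 < Q(s) ≤ 1 on (0,1). -/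
open Real

theorem stmt_12 (ψ : ℝ → ℝ) (a b : ℝ) (k : ℕ) (hk : 0 < k)
    (ha : 1 < a) (hb0 : 0 < b) (hb1 : b < 1)
    (hψnn : ∀ u : ℝ, 0 ≤ ψ u) (hψ0 : ψ 0 = 0)
    (hfe : ∀ u : ℝ, 0 < u → u < 1 → ψ u = a * ψ (b * u))
    (φ φb Q : ℝ → ℝ)
    (hφ : ∀ s : ℝ, φ s = (1 + ψ (1 - s)) ^ (-(1 / (k : ℝ))))
    (hφb : ∀ s : ℝ, φb s = (1 + ψ (b * (1 - s))) ^ (-(1 / (k : ℝ))))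
    (hQ : ∀ s : ℝ, Q s = (a - (a - 1) / (1 + ψ (b * (1 - s)))) ^ (-(1 / (k : ℝ)))) :
    (∀ s : ℝ, 0 < s → s < 1 → φ s = φb s * Q s ∧ 0 < Q s ∧ Q s ≤ 1) ∧ Q 1 = 1 := by
  constructor
  · intro s hs0 hs1
    set v := ψ (b * (1 - s)) with hv
    have hvnn : 0 ≤ v := hψnn _
    have h1v : (0:ℝ) < 1 + v := by linarith
    have hψs : ψ (1 - s) = a * v := hfe (1 - s) (by linarith) (by linarith)
    have hbase : a - (a - 1) / (1 + v) = (1 + a * v) / (1 + v) := by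
      field_simp; ring
    have hbasepos : (0:ℝ) < (1 + a * v) / (1 + v) := by
      apply div_pos _ h1v; nlinarith
    refine ⟨?_, ?_, ?_⟩
    · rw [hφ, hφb, hQ, hψs, ← hv, hbase, ← Real.mul_rpow h1v.le hbasepos.le]
      congr 1
      field_simp
    · rw [hQ, ← hv, hbase]
      exact Real.rpow_pos_of_pos hbasepos _
    · rw [hQ, ← hv, hbase]
      apply Real.rpow_le_one_of_one_le_of_nonpos
      · rw [le_div_iff₀ h1v]; nlinarith
      · simp [div_nonneg, hk.le, Nat.cast_nonneg]
  · rw [hQ]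
    simp [hψ0]
end

section
/- Let P(s) = (1+ψ(1−s^m))^(−1/k) for s ∈ (0,1), where m, k are positive integers and ψ satisfies ψ(u) = a·ψ(b·u), a > 1, 0 < b < 1, ψ ≥ 0, ψ(0) = 0. Then P(s) = P_b(s)·Q(s) where P_b(s) := (1+ψ(b(1−s^m)))^(−1/k) and Q(s) := ((1+ψ(b(1−s^m)))/(a·(1+ψ(b(1−s^m))) − (a−1)))^(1/k); moreover Q(s) ∈ (0,1] and Q(1) = 1. -/
open Real

theorem stmt_13 (ψ : ℝ → ℝ) (a b : ℝ) (m k : ℕ) (hm : 0 < m) (hk : 0 < k)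
    (ha : 1 < a) (hb0 : 0 < b) (hb1 : b < 1)
    (hψnn : ∀ u : ℝ, 0 ≤ ψ u) (hψ0 : ψ 0 = 0)
    (hfe : ∀ u : ℝ, ψ u = a * ψ (b * u))
    (P Pb Q : ℝ → ℝ)
    (hP : ∀ s : ℝ, P s = (1 + ψ (1 - s ^ m)) ^ (-(1 / (k : ℝ))))
    (hPb : ∀ s : ℝ, Pb s = (1 + ψ (b * (1 - s ^ m))) ^ (-(1 / (k : ℝ))))
    (hQ : ∀ s : ℝ, Q s =
      ((1 + ψ (b * (1 - s ^ m))) / (a * (1 + ψ (b * (1 - s ^ m))) - (a - 1)))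
        ^ ((1 : ℝ) / k)) :
    (∀ s : ℝ, 0 < s → s < 1 → P s = Pb s * Q s ∧ 0 < Q s ∧ Q s ≤ 1) ∧ Q 1 = 1 := by
  have hx : (0:ℝ) ≤ 1 / (k : ℝ) := by positivity
  constructor
  · intro s hs0 hs1
    set u := 1 - s ^ m with hu
    have hψu : 0 ≤ ψ (b * u) := hψnn (b * u)
    have ht : (0:ℝ) < 1 + ψ (b * u) := by linarith
    set t := 1 + ψ (b * u) with htdef
    have hc : a * t - (a - 1) = 1 + a * ψ (b * u) := by rw [htdef]; ring
    have hcpos : (0:ℝ) < a * t - (a - 1) := by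
      rw [hc]; nlinarith
    have hPs : P s = (a * t - (a - 1)) ^ (-(1 / (k : ℝ))) := by
      rw [hP, hc, ← hfe u]
    have hle : t ≤ a * t - (a - 1) := by
      rw [hc, htdef]; nlinarith
    have hbase : 0 < t / (a * t - (a - 1)) := div_pos ht hcpos
    have hQs : Q s = (t / (a * t - (a - 1))) ^ ((1:ℝ) / k) := hQ s
    refine ⟨?_, ?_, ?_⟩
    · rw [hPs, hPb, hQs, ← htdef,
        Real.div_rpow ht.le hcpos.le,
        Real.rpow_neg ht.le, Real.rpow_neg hcpos.le]
      field_simp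
    · rw [hQs]; exact Real.rpow_pos_of_pos hbase _
    · rw [hQs]
      exact Real.rpow_le_one hbase.le ((div_le_one hcpos).2 hle) hx
  · rw [hQ]
    norm_num [hψ0]
end
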